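/- Let X be a metric measure space with polynomial volume growth exponent ν and lower ball volume bound as above, Γ ⊆ X uniformly discrete with packing radius r, and let {w_γ}_{γ∈Γ} be a Γ-uniformly localized family: for every μ > 0 there is C_μ with |w_γ(x)| ≤ C_μ (1 + d(x,γ))^{-μ} for all γ, x. For R > 0 let w_γ^R = w_γ · 1_{B_R(γ)} be the truncation. Let {v_γ} be functions with supp v_γ ⊆ B_r(γ) and |v_γ| ≤ c₀, and let V, V^R be the operators Σ_γ w_γ ⊗ v_γ* and Σ_γ w_γ^R ⊗ v_γ*. Then ‖V - V^R‖ → 0 as R → ∞; more precisely, for any fixed μ > ν there is a constant C with ‖V - V^R‖ ≤ C (1+R)^{ν-μ}. -/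

import Mathlib

/-!
Write `c_γ = ⟨v_γ, f⟩` and `u_γ = w_γ - w_γ^R`, so that `(V - V^R) f = Σ_γ c_γ u_γ`. Since the
`v_γ` live on the disjoint balls `B_r(γ)`, the analysis map is bounded: `Σ_γ |c_γ|² ≲ ‖f‖²`.
Fix `p > 1` and `m = ν + 2p`. Then `|u_γ(x)| ≤ C (1 + d(x,γ))^{-m} 1_{d(x,γ) ≥ R} =: W_γ(x)`, and
* `∫ W_γ ≲ (1+R)^{-p}` uniformly in `γ`: cut `X ∖ B_R(γ)` into unit shells, whose volume grows
  like `(1+R+k)^ν`, and use `(1+R+k)^{-2p} ≤ (1+R)^{-p} (1+k)^{-p}`;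
* `Σ_γ W_γ(x) ≲ (1+R)^{-p}` uniformly in `x`: each term is dominated by an average of the same
  kind of function over `B_ρ(γ)`, `ρ = min r r₀`, whose volume is bounded below, and these balls
  are disjoint, so the sum is dominated by an integral of the first kind.
The Cauchy–Schwarz inequality `|Σ c_γ u_γ|² ≤ (Σ_γ W_γ) (Σ_γ |c_γ|² W_γ)` (Schur's test)
then gives `‖(V - V^R) f‖ ≲ (1+R)^{-p} ‖f‖`, and `p = μ + 1` yields the claim.
-/

open MeasureTheory Metric Function
open scoped ENNReal NNReal

theorem ENNReal.tsum_mul_sq_le {ι : Type*} (w f : ι → ℝ≥0∞) :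
    (∑' i, w i * f i) ^ 2 ≤ (∑' i, w i) * ∑' i, w i * f i ^ 2 := by
  rw [ENNReal.tsum_eq_iSup_sum, ENNReal.iSup_pow_of_ne_zero two_ne_zero]
  refine iSup_le fun s => ?_
  have holder := ENNReal.inner_le_weight_mul_Lp_of_nonneg s one_le_two w f
  rw [show (1 : ℝ) - 2⁻¹ = 2⁻¹ by norm_num, ← ENNReal.mul_rpow_of_nonneg _ _ (by norm_num)]
    at holder
  calc (∑ i ∈ s, w i * f i) ^ 2
      ≤ (((∑ i ∈ s, w i) * ∑ i ∈ s, w i * f i ^ (2 : ℝ)) ^ (2⁻¹ : ℝ)) ^ (2 : ℝ) := by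
        rw [ENNReal.rpow_two]; gcongr
    _ = (∑ i ∈ s, w i) * ∑ i ∈ s, w i * f i ^ 2 := by
        simp only [ENNReal.rpow_inv_rpow two_ne_zero, ENNReal.rpow_two]
    _ ≤ (∑' i, w i) * ∑' i, w i * f i ^ 2 := by
        gcongr <;> exact ENNReal.sum_le_tsum s

theorem countable_of_tsum_ne_top {ι : Type*} {f : ι → ℝ≥0∞} (hf : ∀ i, f i ≠ 0)
    (h : ∑' i, f i ≠ ∞) : Countable ι := by
  have hsupp := Summable.countable_support_ennreal h
  rwa [Function.support_eq_univ hf, Set.countable_univ_iff] at hsupp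

theorem MeasureTheory.tsum_setLIntegral_le_lintegral {α ι : Type*} [MeasurableSpace α]
    {μ : Measure α} {s : ι → Set α} (hs : ∀ i, MeasurableSet (s i))
    (hd : Pairwise (Disjoint on s)) (f : α → ℝ≥0∞) :
    ∑' i, ∫⁻ x in s i, f x ∂μ ≤ ∫⁻ x, f x ∂μ := by
  simp only [← withDensity_apply _ (hs _)]
  calc ∑' i, μ.withDensity f (s i) ≤ μ.withDensity f (⋃ i, s i) :=
        tsum_meas_le_meas_iUnion_of_disjoint _ hs hd
    _ ≤ μ.withDensity f Set.univ := measure_mono (Set.subset_univ _)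
    _ = ∫⁻ x, f x ∂μ := by rw [withDensity_apply _ MeasurableSet.univ, Measure.restrict_univ]

theorem MeasureTheory.sq_setLIntegral_le {α : Type*} [MeasurableSpace α] {μ : Measure α}
    {g : α → ℝ≥0∞} (s : Set α) (hg : AEMeasurable g (μ.restrict s)) :
    (∫⁻ x in s, g x ∂μ) ^ 2 ≤ μ s * ∫⁻ x in s, g x ^ 2 ∂μ := by
  have holder := ENNReal.lintegral_mul_le_Lp_mul_Lq (μ.restrict s) Real.HolderConjugate.two_two
    aemeasurable_const hg (f := 1)
  simp only [Pi.mul_apply, Pi.one_apply, one_mul, ENNReal.one_rpow, lintegral_one,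
    Measure.restrict_apply_univ] at holder
  rw [← ENNReal.mul_rpow_of_nonneg _ _ (by norm_num)] at holder
  calc (∫⁻ x in s, g x ∂μ) ^ 2 ≤ ((μ s * ∫⁻ x in s, g x ^ (2 : ℝ) ∂μ) ^ (1 / 2 : ℝ)) ^ (2 : ℝ) := by
        rw [ENNReal.rpow_two]; gcongr
    _ = μ s * ∫⁻ x in s, g x ^ 2 ∂μ := by
        simp only [one_div, ENNReal.rpow_inv_rpow two_ne_zero, ENNReal.rpow_two]

theorem one_add_add_rpow_neg_two_mul_le {s k p : ℝ} (hs : 0 ≤ s) (hk : 0 ≤ k) (hp : 0 ≤ p) :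
    (1 + (s + k)) ^ (-(2 * p)) ≤ (1 + s) ^ (-p) * (1 + k) ^ (-p) := by
  have hsq : (1 + s) * (1 + k) ≤ (1 + (s + k)) ^ (2 : ℝ) := by
    rw [Real.rpow_two]; nlinarith [mul_nonneg hs hk]
  calc (1 + (s + k)) ^ (-(2 * p)) = ((1 + (s + k)) ^ (2 : ℝ)) ^ (-p) := by
        rw [← Real.rpow_mul (by linarith)]; ring_nf
    _ ≤ ((1 + s) * (1 + k)) ^ (-p) :=
        Real.rpow_le_rpow_of_nonpos (by positivity) hsq (by linarith)
    _ = (1 + s) ^ (-p) * (1 + k) ^ (-p) := Real.mul_rpow (by linarith) (by linarith)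

theorem one_add_rpow_neg_add_mul_le {t ν q : ℝ} (ht : 0 ≤ t) (hν : 0 ≤ ν) :
    (1 + t) ^ (-(ν + q)) * (1 + (t + 1)) ^ ν ≤ 2 ^ ν * (1 + t) ^ (-q) := by
  have h2 : (1 + (t + 1)) ^ ν ≤ (2 * (1 + t)) ^ ν :=
    Real.rpow_le_rpow (by linarith) (by linarith) hν
  rw [Real.mul_rpow (by norm_num) (by linarith)] at h2
  calc (1 + t) ^ (-(ν + q)) * (1 + (t + 1)) ^ ν ≤ (1 + t) ^ (-(ν + q)) * (2 ^ ν * (1 + t) ^ ν) := by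
        gcongr
    _ = 2 ^ ν * (1 + t) ^ (-q) := by
        rw [mul_left_comm, ← Real.rpow_add (by linarith)]; ring_nf

theorem tsum_ofReal_one_add_rpow_neg_ne_top {p : ℝ} (hp : 1 < p) :
    ∑' k : ℕ, ENNReal.ofReal ((1 + k) ^ (-p)) ≠ ∞ := by
  have hsum : Summable fun k : ℕ => (1 + (k : ℝ)) ^ (-p) := by
    refine ((Real.summable_one_div_nat_add_rpow 1 p).mpr hp).congr fun k => ?_
    rw [abs_of_nonneg (by positivity), add_comm, Real.rpow_neg (by positivity), one_div]
  rw [← ENNReal.ofReal_tsum_of_nonneg (fun k => by positivity) hsum]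
  exact ENNReal.ofReal_ne_top

theorem one_add_max_sub_rpow_neg_le {s ρ p : ℝ} (hs : 0 ≤ s) (hρ : 0 ≤ ρ) (hp : 0 ≤ p) :
    (1 + max (s - ρ) 0) ^ (-p) ≤ (1 + ρ) ^ p * (1 + s) ^ (-p) := by
  have hle : 1 + s ≤ (1 + ρ) * (1 + max (s - ρ) 0) := by
    nlinarith [le_max_left (s - ρ) 0, le_max_right (s - ρ) 0]
  have h := Real.rpow_le_rpow_of_nonpos (by linarith) hle (neg_nonpos.mpr hp)
  rw [Real.mul_rpow (by linarith) (by positivity)] at h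
  calc (1 + max (s - ρ) 0) ^ (-p)
      = (1 + ρ) ^ p * ((1 + ρ) ^ (-p) * (1 + max (s - ρ) 0) ^ (-p)) := by
        rw [← mul_assoc, ← Real.rpow_add (by linarith), add_neg_cancel, Real.rpow_zero, one_mul]
    _ ≤ (1 + ρ) ^ p * (1 + s) ^ (-p) := by gcongr

section

variable {ι 𝕜 E : Type*} [NormedField 𝕜] [NormedAddCommGroup E] [NormedSpace 𝕜 E]

theorem sq_tsum_enorm_smul_le {c : ι → 𝕜} {u : ι → E} {W : ι → ℝ≥0∞} (hu : ∀ i, ‖u i‖ₑ ≤ W i) :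
    (∑' i, ‖c i • u i‖ₑ) ^ 2 ≤ (∑' i, W i) * ∑' i, W i * ‖c i‖ₑ ^ 2 := by
  calc (∑' i, ‖c i • u i‖ₑ) ^ 2 ≤ (∑' i, W i * ‖c i‖ₑ) ^ 2 := by
        refine pow_le_pow_left' (ENNReal.tsum_le_tsum fun i => ?_) 2
        rw [enorm_smul, mul_comm]
        gcongr
        exact hu i
    _ ≤ _ := ENNReal.tsum_mul_sq_le _ _

theorem summable_smul_of_tsum_enorm_sq_ne_top [CompleteSpace E] {c : ι → 𝕜} {u : ι → E}
    {W : ι → ℝ≥0∞} (hc : ∑' i, ‖c i‖ₑ ^ 2 ≠ ∞) (hu : ∀ i, ‖u i‖ₑ ≤ W i) (hW : ∑' i, W i ≠ ∞) :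
    Summable fun i => c i • u i := by
  refine Summable.of_enorm fun htop => ?_
  have hbound : (∑' i, ‖c i • u i‖ₑ) ^ 2 ≤ (∑' i, W i) * ((∑' i, W i) * ∑' i, ‖c i‖ₑ ^ 2) := by
    refine (sq_tsum_enorm_smul_le hu).trans ?_
    rw [← ENNReal.tsum_mul_left (f := fun i => ‖c i‖ₑ ^ 2)]
    gcongr (∑' i, W i) * ?_
    exact ENNReal.tsum_le_tsum fun i => mul_le_mul_left (ENNReal.le_tsum i) _
  have hfin : (∑' i, W i) * ((∑' i, W i) * ∑' i, ‖c i‖ₑ ^ 2) ≠ ∞ := by finiteness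
  exact hfin (top_unique (by simpa [htop] using hbound))

variable {α : Type*} [MeasurableSpace α] {μ : Measure α}

theorem lintegral_enorm_tsum_smul_sq_le [Countable ι] (c : ι → 𝕜) {u : ι → α → E}
    {W : ι → α → ℝ≥0∞} (hW : ∀ i, Measurable (W i)) (hu : ∀ i x, ‖u i x‖ₑ ≤ W i x)
    {S T : ℝ≥0∞} (hS : ∀ x, ∑' i, W i x ≤ S) (hT : ∀ i, ∫⁻ x, W i x ∂μ ≤ T) :
    ∫⁻ x, ‖∑' i, c i • u i x‖ₑ ^ 2 ∂μ ≤ S * T * ∑' i, ‖c i‖ₑ ^ 2 := by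
  have pointwise (x : α) : ‖∑' i, c i • u i x‖ₑ ^ 2 ≤ S * ∑' i, ‖c i‖ₑ ^ 2 * W i x := by
    calc ‖∑' i, c i • u i x‖ₑ ^ 2 ≤ (∑' i, ‖c i • u i x‖ₑ) ^ 2 := by
          gcongr; exact enorm_tsum_le_tsum_enorm
      _ ≤ (∑' i, W i x) * ∑' i, W i x * ‖c i‖ₑ ^ 2 := sq_tsum_enorm_smul_le (hu · x)
      _ ≤ S * ∑' i, ‖c i‖ₑ ^ 2 * W i x := by simp only [mul_comm (W _ x)]; gcongr; exact hS x
  calc ∫⁻ x, ‖∑' i, c i • u i x‖ₑ ^ 2 ∂μ ≤ ∫⁻ x, S * ∑' i, ‖c i‖ₑ ^ 2 * W i x ∂μ :=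
        lintegral_mono pointwise
    _ = S * ∑' i, ‖c i‖ₑ ^ 2 * ∫⁻ x, W i x ∂μ := by
        rw [lintegral_const_mul _ (Measurable.tsum fun i => (hW i).const_mul _),
          lintegral_tsum fun i => ((hW i).const_mul _).aemeasurable]
        simp_rw [lintegral_const_mul _ (hW _)]
    _ ≤ S * T * ∑' i, ‖c i‖ₑ ^ 2 := by
        rw [mul_assoc, ← ENNReal.tsum_mul_left (a := T)]
        gcongr S * ?_
        refine ENNReal.tsum_le_tsum fun i => ?_
        rw [mul_comm T]; gcongr; exact hT i

end

section

variable {α : Type*} [MeasurableSpace α] {μ : Measure α}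

theorem eLpNorm_two_sq {ε : Type*} [ENorm ε] (f : α → ε) :
    eLpNorm f 2 μ ^ 2 = ∫⁻ x, ‖f x‖ₑ ^ 2 ∂μ := by
  simpa [ENNReal.rpow_two] using
    eLpNorm_nnreal_pow_eq_lintegral (f := f) (μ := μ) (p := 2) two_ne_zero

theorem eLpNorm_two_le_of_lintegral_sq_le {ε ε' : Type*} [ENorm ε] [ENorm ε'] {f : α → ε}
    {g : α → ε'} {K : ℝ≥0∞} (h : ∫⁻ x, ‖g x‖ₑ ^ 2 ∂μ ≤ K ^ 2 * ∫⁻ x, ‖f x‖ₑ ^ 2 ∂μ) :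
    eLpNorm g 2 μ ≤ K * eLpNorm f 2 μ := by
  rwa [← ENNReal.pow_le_pow_left_iff two_ne_zero, mul_pow, eLpNorm_two_sq, eLpNorm_two_sq]

variable {𝕜 : Type*} [RCLike 𝕜]

theorem enorm_integral_conj_mul_le {s : Set α} (hs : MeasurableSet s) {v f : α → 𝕜} {c₀ : ℝ}
    (hvsupp : ∀ x, v x ≠ 0 → x ∈ s) (hvbound : ∀ x, ‖v x‖ ≤ c₀) :
    ‖∫ x, starRingEnd 𝕜 (v x) * f x ∂μ‖ₑ ≤ ENNReal.ofReal c₀ * ∫⁻ x in s, ‖f x‖ₑ ∂μ := by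
  calc ‖∫ x, starRingEnd 𝕜 (v x) * f x ∂μ‖ₑ ≤ ∫⁻ x, ‖starRingEnd 𝕜 (v x) * f x‖ₑ ∂μ :=
        enorm_integral_le_lintegral_enorm _
    _ ≤ ∫⁻ x, s.indicator (fun x => ENNReal.ofReal c₀ * ‖f x‖ₑ) x ∂μ := by
        refine lintegral_mono fun x => ?_
        by_cases hv : v x = 0
        · simp [hv]
        rw [Set.indicator_of_mem (hvsupp x hv), enorm_mul, RCLike.enorm_conj, ← ofReal_norm]
        gcongr
        exact hvbound x
    _ = ENNReal.ofReal c₀ * ∫⁻ x in s, ‖f x‖ₑ ∂μ := by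
        rw [lintegral_indicator hs, lintegral_const_mul' _ _ ENNReal.ofReal_ne_top]

theorem tsum_enorm_integral_conj_mul_sq_le {ι : Type*} {s : ι → Set α}
    (hs : ∀ i, MeasurableSet (s i)) (hd : Pairwise (Disjoint on s)) {M : ℝ≥0∞}
    (hM : ∀ i, μ (s i) ≤ M) {v : ι → α → 𝕜} {c₀ : ℝ} (hvsupp : ∀ i x, v i x ≠ 0 → x ∈ s i)
    (hvbound : ∀ i x, ‖v i x‖ ≤ c₀) {f : α → 𝕜} (hf : AEMeasurable f μ) :
    ∑' i, ‖∫ x, starRingEnd 𝕜 (v i x) * f x ∂μ‖ₑ ^ 2 ≤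
      ENNReal.ofReal c₀ ^ 2 * M * ∫⁻ x, ‖f x‖ₑ ^ 2 ∂μ := by
  have term (i : ι) : ‖∫ x, starRingEnd 𝕜 (v i x) * f x ∂μ‖ₑ ^ 2 ≤
      ENNReal.ofReal c₀ ^ 2 * M * ∫⁻ x in s i, ‖f x‖ₑ ^ 2 ∂μ := by
    calc ‖∫ x, starRingEnd 𝕜 (v i x) * f x ∂μ‖ₑ ^ 2
        ≤ (ENNReal.ofReal c₀ * ∫⁻ x in s i, ‖f x‖ₑ ∂μ) ^ 2 :=
          pow_le_pow_left' (enorm_integral_conj_mul_le (hs i) (hvsupp i) (hvbound i)) 2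
      _ ≤ ENNReal.ofReal c₀ ^ 2 * (μ (s i) * ∫⁻ x in s i, ‖f x‖ₑ ^ 2 ∂μ) := by
          rw [mul_pow]
          gcongr
          exact sq_setLIntegral_le _ hf.enorm.restrict
      _ ≤ ENNReal.ofReal c₀ ^ 2 * M * ∫⁻ x in s i, ‖f x‖ₑ ^ 2 ∂μ := by
          rw [mul_assoc]; gcongr; exact hM i
  calc ∑' i, ‖∫ x, starRingEnd 𝕜 (v i x) * f x ∂μ‖ₑ ^ 2
      ≤ ∑' i, ENNReal.ofReal c₀ ^ 2 * M * ∫⁻ x in s i, ‖f x‖ₑ ^ 2 ∂μ := ENNReal.tsum_le_tsum term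
    _ ≤ ENNReal.ofReal c₀ ^ 2 * M * ∫⁻ x, ‖f x‖ₑ ^ 2 ∂μ := by
        rw [ENNReal.tsum_mul_left]
        gcongr
        exact tsum_setLIntegral_le_lintegral hs hd _

end

section

variable {X : Type*} [MetricSpace X]

noncomputable def tailWeight (m s : ℝ) (z x : X) : ℝ≥0∞ :=
  (ball z s)ᶜ.indicator (fun x => ENNReal.ofReal ((1 + dist x z) ^ (-m))) x

theorem tailWeight_zero (m : ℝ) (z x : X) :
    tailWeight m 0 z x = ENNReal.ofReal ((1 + dist x z) ^ (-m)) := by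
  simp [tailWeight]

theorem tailWeight_zero_pos (m : ℝ) (z x : X) : 0 < tailWeight m 0 z x := by
  rw [tailWeight_zero]
  exact ENNReal.ofReal_pos.mpr (Real.rpow_pos_of_pos (by positivity) _)

theorem enorm_indicator_compl_ball_le {E : Type*} [NormedAddCommGroup E] {w : X → E} {z : X}
    {m C : ℝ} (hw : ∀ x, ‖w x‖ ≤ C * (1 + dist x z) ^ (-m)) (s : ℝ) (x : X) :
    ‖(ball z s)ᶜ.indicator w x‖ₑ ≤ ENNReal.ofReal C * tailWeight m s z x := by
  by_cases hx : x ∈ ball z s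
  · simp [hx]
  simp only [tailWeight, Set.indicator_of_mem (Set.mem_compl hx)]
  rw [← ENNReal.ofReal_mul' (by positivity), ← ofReal_norm]
  exact ENNReal.ofReal_le_ofReal (hw x)

theorem enorm_le_tailWeight_zero {E : Type*} [NormedAddCommGroup E] {w : X → E} {z : X}
    {m C : ℝ} (hw : ∀ x, ‖w x‖ ≤ C * (1 + dist x z) ^ (-m)) (x : X) :
    ‖w x‖ₑ ≤ ENNReal.ofReal C * tailWeight m 0 z x := by
  simpa using enorm_indicator_compl_ball_le hw 0 x

theorem tailWeight_le_of_mem_ball {m s ρ : ℝ} (hm : 0 ≤ m) (hρ : 0 ≤ ρ) {x y z : X}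
    (hy : y ∈ ball z ρ) :
    tailWeight m s z x ≤ ENNReal.ofReal ((1 + ρ) ^ m) * tailWeight m (max (s - ρ) 0) x y := by
  by_cases hx : x ∈ ball z s
  · simp [tailWeight, hx]
  rw [mem_ball, not_lt] at hx
  rw [mem_ball] at hy
  have hyx : max (s - ρ) 0 ≤ dist y x := by
    refine max_le ?_ dist_nonneg
    linarith [dist_triangle x y z, dist_comm x y]
  have hxy : 1 + dist y x ≤ (1 + ρ) * (1 + dist x z) := by
    nlinarith [dist_triangle y z x, dist_comm x z, dist_nonneg (x := x) (y := z)]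
  simp only [tailWeight, Set.indicator_of_mem (show x ∈ (ball z s)ᶜ by simpa using hx),
    Set.indicator_of_mem (show y ∈ (ball x (max (s - ρ) 0))ᶜ by simpa using hyx)]
  rw [← ENNReal.ofReal_mul (by positivity)]
  refine ENNReal.ofReal_le_ofReal ?_
  have hρ1 : 0 < 1 + ρ := by linarith
  calc (1 + dist x z) ^ (-m) = (1 + ρ) ^ m * ((1 + ρ) * (1 + dist x z)) ^ (-m) := by
        rw [Real.mul_rpow hρ1.le (by positivity), ← mul_assoc, ← Real.rpow_add hρ1,
          add_neg_cancel, Real.rpow_zero, one_mul]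
    _ ≤ (1 + ρ) ^ m * (1 + dist y x) ^ (-m) := by
        refine mul_le_mul_of_nonneg_left ?_ (by positivity)
        exact Real.rpow_le_rpow_of_nonpos (by positivity) hxy (by linarith)

theorem compl_ball_subset_iUnion_diff_ball (z : X) (s : ℝ) :
    (ball z s)ᶜ ⊆ ⋃ k : ℕ, ball z (s + k + 1) \ ball z (s + k) := by
  intro x hx
  rw [Set.mem_compl_iff, mem_ball, not_lt] at hx
  have hfloor := Nat.floor_le (sub_nonneg.mpr hx)
  have hfloor' := Nat.lt_floor_add_one (dist x z - s)
  refine Set.mem_iUnion.mpr ⟨⌊dist x z - s⌋₊, ?_, ?_⟩ <;> simp only [mem_ball, not_lt] <;> linarith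

end

section

variable {X : Type*} [MetricSpace X] [MeasurableSpace X] [OpensMeasurableSpace X] {μ : Measure X}

theorem measurable_tailWeight (m s : ℝ) (z : X) :
    Measurable (tailWeight m s z) := by
  refine Measurable.indicator (ENNReal.measurable_ofReal.comp ?_) measurableSet_ball.compl
  exact (measurable_const.add (continuous_id.dist continuous_const).measurable).pow_const _

theorem setLIntegral_diff_ball_le {a : ℝ≥0} {ν q : ℝ} (hν : 0 ≤ ν) (hq : 0 ≤ q)
    (hgrowth : ∀ x R, 0 ≤ R → μ (ball x R) ≤ a * ENNReal.ofReal ((1 + R) ^ ν))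
    (z : X) {t : ℝ} (ht : 0 ≤ t) :
    ∫⁻ x in ball z (t + 1) \ ball z t, ENNReal.ofReal ((1 + dist x z) ^ (-(ν + q))) ∂μ ≤
      a * ENNReal.ofReal (2 ^ ν * (1 + t) ^ (-q)) := by
  calc ∫⁻ x in ball z (t + 1) \ ball z t, ENNReal.ofReal ((1 + dist x z) ^ (-(ν + q))) ∂μ
      ≤ ∫⁻ _ in ball z (t + 1) \ ball z t, ENNReal.ofReal ((1 + t) ^ (-(ν + q))) ∂μ := by
        refine setLIntegral_mono' (measurableSet_ball.diff measurableSet_ball) fun x hx => ?_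
        simp only [Set.mem_sdiff, mem_ball, not_lt] at hx
        exact ENNReal.ofReal_le_ofReal
          (Real.rpow_le_rpow_of_nonpos (by linarith) (by linarith) (by linarith))
    _ = ENNReal.ofReal ((1 + t) ^ (-(ν + q))) * μ (ball z (t + 1) \ ball z t) :=
        setLIntegral_const _ _
    _ ≤ ENNReal.ofReal ((1 + t) ^ (-(ν + q))) * (a * ENNReal.ofReal ((1 + (t + 1)) ^ ν)) := by
        gcongr
        exact (measure_mono Set.sdiff_subset).trans (hgrowth z _ (by linarith))
    _ = a * ENNReal.ofReal ((1 + t) ^ (-(ν + q)) * (1 + (t + 1)) ^ ν) := by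
        rw [ENNReal.ofReal_mul (by positivity)]; ring
    _ ≤ a * ENNReal.ofReal (2 ^ ν * (1 + t) ^ (-q)) :=
        mul_le_mul_right (ENNReal.ofReal_le_ofReal (one_add_rpow_neg_add_mul_le ht hν)) _

theorem exists_lintegral_tailWeight_le {a : ℝ≥0} {ν p : ℝ} (hν : 0 ≤ ν) (hp : 1 < p)
    (hgrowth : ∀ x R, 0 ≤ R → μ (ball x R) ≤ a * ENNReal.ofReal ((1 + R) ^ ν)) :
    ∃ K : ℝ≥0∞, K ≠ ∞ ∧ ∀ z s, 0 ≤ s →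
      ∫⁻ x, tailWeight (ν + 2 * p) s z x ∂μ ≤ K * ENNReal.ofReal ((1 + s) ^ (-p)) := by
  refine ⟨a * ENNReal.ofReal (2 ^ ν) * ∑' k : ℕ, ENNReal.ofReal ((1 + k) ^ (-p)),
    ENNReal.mul_ne_top (by finiteness) (tsum_ofReal_one_add_rpow_neg_ne_top hp), fun z s hs => ?_⟩
  have shell (k : ℕ) :
      ∫⁻ x in ball z (s + k + 1) \ ball z (s + k),
        ENNReal.ofReal ((1 + dist x z) ^ (-(ν + 2 * p))) ∂μ ≤
      a * ENNReal.ofReal (2 ^ ν) * ENNReal.ofReal ((1 + k) ^ (-p)) *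
        ENNReal.ofReal ((1 + s) ^ (-p)) := by
    refine (setLIntegral_diff_ball_le hν (by linarith) hgrowth z (by positivity)).trans ?_
    rw [mul_assoc, mul_assoc, ← ENNReal.ofReal_mul (by positivity),
      ← ENNReal.ofReal_mul (by positivity)]
    gcongr
    rw [mul_comm ((1 + (k : ℝ)) ^ (-p))]
    exact one_add_add_rpow_neg_two_mul_le hs k.cast_nonneg (by linarith)
  calc ∫⁻ x, tailWeight (ν + 2 * p) s z x ∂μ
      = ∫⁻ x in (ball z s)ᶜ, ENNReal.ofReal ((1 + dist x z) ^ (-(ν + 2 * p))) ∂μ :=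
        lintegral_indicator measurableSet_ball.compl _
    _ ≤ ∫⁻ x in ⋃ k : ℕ, ball z (s + k + 1) \ ball z (s + k),
          ENNReal.ofReal ((1 + dist x z) ^ (-(ν + 2 * p))) ∂μ :=
        lintegral_mono_set (compl_ball_subset_iUnion_diff_ball z s)
    _ ≤ ∑' k : ℕ, ∫⁻ x in ball z (s + k + 1) \ ball z (s + k),
          ENNReal.ofReal ((1 + dist x z) ^ (-(ν + 2 * p))) ∂μ :=
        lintegral_iUnion_le _ _
    _ ≤ _ := (ENNReal.tsum_le_tsum shell).trans_eq
        (by rw [ENNReal.tsum_mul_right, ENNReal.tsum_mul_left])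

theorem exists_tsum_tailWeight_le {a b : ℝ≥0} {ν p ρ : ℝ} (hν : 0 ≤ ν) (hp : 1 < p)
    (hgrowth : ∀ x R, 0 ≤ R → μ (ball x R) ≤ a * ENNReal.ofReal ((1 + R) ^ ν))
    {Γ : Set X} (hρ : 0 < ρ) (hΓ : Pairwise (Disjoint on fun γ : Γ => ball (γ : X) ρ))
    (hb : b ≠ 0) (hlower : ∀ γ ∈ Γ, b ≤ μ (ball γ ρ)) :
    ∃ K : ℝ≥0∞, K ≠ ∞ ∧ ∀ (x : X) s, 0 ≤ s →
      ∑' γ : Γ, tailWeight (ν + 2 * p) s (γ : X) x ≤ K * ENNReal.ofReal ((1 + s) ^ (-p)) := by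
  obtain ⟨K, hK, hint⟩ := exists_lintegral_tailWeight_le (μ := μ) hν hp hgrowth
  set m := ν + 2 * p
  refine ⟨(b : ℝ≥0∞)⁻¹ * (ENNReal.ofReal ((1 + ρ) ^ m) * K * ENNReal.ofReal ((1 + ρ) ^ p)),
    by finiteness, fun x s hs => ?_⟩
  set H := tailWeight m (max (s - ρ) 0) x
  have local_bound (γ : Γ) :
      b * tailWeight m s (γ : X) x ≤
        ENNReal.ofReal ((1 + ρ) ^ m) * ∫⁻ y in ball (γ : X) ρ, H y ∂μ := by
    calc b * tailWeight m s (γ : X) x ≤ ∫⁻ _ in ball (γ : X) ρ, tailWeight m s (γ : X) x ∂μ := by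
          rw [setLIntegral_const, mul_comm]; gcongr; exact hlower γ γ.2
      _ ≤ ∫⁻ y in ball (γ : X) ρ, ENNReal.ofReal ((1 + ρ) ^ m) * H y ∂μ :=
          setLIntegral_mono' measurableSet_ball fun y hy =>
            tailWeight_le_of_mem_ball (by positivity) hρ.le hy
      _ = ENNReal.ofReal ((1 + ρ) ^ m) * ∫⁻ y in ball (γ : X) ρ, H y ∂μ :=
          lintegral_const_mul _ (measurable_tailWeight _ _ _)
  have hsum : b * ∑' γ : Γ, tailWeight m s (γ : X) x ≤
      ENNReal.ofReal ((1 + ρ) ^ m) * K * ENNReal.ofReal ((1 + ρ) ^ p) *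
        ENNReal.ofReal ((1 + s) ^ (-p)) := by
    calc b * ∑' γ : Γ, tailWeight m s (γ : X) x
        ≤ ENNReal.ofReal ((1 + ρ) ^ m) * ∑' γ : Γ, ∫⁻ y in ball (γ : X) ρ, H y ∂μ := by
          rw [← ENNReal.tsum_mul_left, ← ENNReal.tsum_mul_left]
          exact ENNReal.tsum_le_tsum local_bound
      _ ≤ ENNReal.ofReal ((1 + ρ) ^ m) * (K * ENNReal.ofReal ((1 + max (s - ρ) 0) ^ (-p))) := by
          gcongr
          exact (tsum_setLIntegral_le_lintegral (fun _ => measurableSet_ball) hΓ H).trans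
            (hint x _ (le_max_right _ _))
      _ ≤ ENNReal.ofReal ((1 + ρ) ^ m) * (K * ENNReal.ofReal ((1 + ρ) ^ p * (1 + s) ^ (-p))) := by
          gcongr; exact one_add_max_sub_rpow_neg_le hs hρ.le (by linarith)
      _ = _ := by rw [ENNReal.ofReal_mul (by positivity)]; ring
  rw [mul_assoc, ← ENNReal.mul_le_iff_le_inv (by simpa using hb) ENNReal.coe_ne_top]
  exact hsum

theorem exists_lintegral_enorm_tsum_sub_truncation_sq_le {𝕜 : Type*} [RCLike 𝕜] {a b : ℝ≥0}
    {ν p ρ C : ℝ} (hν : 0 ≤ ν) (hp : 1 < p)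
    (hgrowth : ∀ x R, 0 ≤ R → μ (ball x R) ≤ a * ENNReal.ofReal ((1 + R) ^ ν))
    {Γ : Set X} (hρ : 0 < ρ) (hΓ : Pairwise (Disjoint on fun γ : Γ => ball (γ : X) ρ))
    (hb : b ≠ 0) (hlower : ∀ γ ∈ Γ, b ≤ μ (ball γ ρ)) {w : Γ → X → 𝕜}
    (hw : ∀ γ x, ‖w γ x‖ ≤ C * (1 + dist x (γ : X)) ^ (-(ν + 2 * p))) :
    ∃ K : ℝ≥0∞, K ≠ ∞ ∧ ∀ R, 0 ≤ R → ∀ c : Γ → 𝕜, ∑' γ, ‖c γ‖ₑ ^ 2 ≠ ∞ →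
      ∫⁻ x, ‖(∑' γ, c γ * w γ x) - ∑' γ, c γ * (ball (γ : X) R).indicator (w γ) x‖ₑ ^ 2 ∂μ ≤
        K * ENNReal.ofReal ((1 + R) ^ (-p)) ^ 2 * ∑' γ, ‖c γ‖ₑ ^ 2 := by
  obtain ⟨Kt, hKt, hint⟩ := exists_lintegral_tailWeight_le (μ := μ) hν hp hgrowth
  obtain ⟨Ks, hKs, hsum⟩ := exists_tsum_tailWeight_le hν hp hgrowth hρ hΓ hb hlower
  have : Countable Γ := by
    rcases isEmpty_or_nonempty Γ with _ | ⟨⟨γ⟩⟩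
    · infer_instance
    exact countable_of_tsum_ne_top (fun _ => (tailWeight_zero_pos _ _ _).ne')
      (ne_top_of_le_ne_top (by finiteness) (hsum (γ : X) 0 le_rfl))
  have hW (x : X) : ∑' γ : Γ, ENNReal.ofReal C * tailWeight (ν + 2 * p) 0 (γ : X) x ≠ ∞ := by
    rw [ENNReal.tsum_mul_left]
    exact ENNReal.mul_ne_top ENNReal.ofReal_ne_top
      (ne_top_of_le_ne_top (by finiteness) (hsum x 0 le_rfl))
  refine ⟨ENNReal.ofReal C ^ 2 * Ks * Kt, by finiteness, fun R hR c hc => ?_⟩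
  have hdiff (x : X) : (∑' γ, c γ * w γ x) - ∑' γ, c γ * (ball (γ : X) R).indicator (w γ) x =
      ∑' γ, c γ • (ball (γ : X) R)ᶜ.indicator (w γ) x := by
    have hw0 (γ : Γ) := enorm_le_tailWeight_zero (hw γ) x
    calc _ = ∑' γ, (c γ • w γ x - c γ • (ball (γ : X) R).indicator (w γ) x) :=
          ((summable_smul_of_tsum_enorm_sq_ne_top hc hw0 (hW x)).tsum_sub
            (summable_smul_of_tsum_enorm_sq_ne_top hc
              (fun γ => (enorm_indicator_le_enorm_self _ _).trans (hw0 γ)) (hW x))).symm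
      _ = _ := by simp only [Set.indicator_compl, Pi.sub_apply, smul_sub]
  simp only [hdiff]
  calc ∫⁻ x, ‖∑' γ, c γ • (ball (γ : X) R)ᶜ.indicator (w γ) x‖ₑ ^ 2 ∂μ
      ≤ (ENNReal.ofReal C * (Ks * ENNReal.ofReal ((1 + R) ^ (-p)))) *
          (ENNReal.ofReal C * (Kt * ENNReal.ofReal ((1 + R) ^ (-p)))) * ∑' γ, ‖c γ‖ₑ ^ 2 := by
        refine lintegral_enorm_tsum_smul_sq_le c
          (fun γ => (measurable_tailWeight _ _ _).const_mul _)
          (fun γ => enorm_indicator_compl_ball_le (hw γ) R) (fun x => ?_) (fun γ => ?_)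
        · rw [ENNReal.tsum_mul_left]; gcongr; exact hsum x R hR
        · rw [lintegral_const_mul _ (measurable_tailWeight _ _ _)]; gcongr; exact hint γ R hR
    _ = _ := by ring

theorem exists_eLpNorm_sub_truncation_le {𝕜 : Type*} [RCLike 𝕜] {a b : ℝ≥0} {ν p ρ r C c₀ : ℝ}
    (hν : 0 ≤ ν) (hp : 1 < p)
    (hgrowth : ∀ x R, 0 ≤ R → μ (ball x R) ≤ a * ENNReal.ofReal ((1 + R) ^ ν))
    {Γ : Set X} (hρ : 0 < ρ) (hρr : ρ ≤ r) (hΓ : Pairwise (Disjoint on fun γ : Γ => ball (γ : X) r))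
    (hb : b ≠ 0) (hlower : ∀ γ ∈ Γ, b ≤ μ (ball γ ρ)) {w : Γ → X → 𝕜}
    (hw : ∀ γ x, ‖w γ x‖ ≤ C * (1 + dist x (γ : X)) ^ (-(ν + 2 * p))) {v : Γ → X → 𝕜}
    (hvsupp : ∀ γ x, v γ x ≠ 0 → x ∈ ball (γ : X) r) (hvbound : ∀ γ x, ‖v γ x‖ ≤ c₀) :
    ∃ K : ℝ≥0∞, K ≠ ∞ ∧ ∀ R, 0 ≤ R → ∀ f : X → 𝕜, MemLp f 2 μ →
      eLpNorm (fun x => (∑' γ : Γ, (∫ y, starRingEnd 𝕜 (v γ y) * f y ∂μ) * w γ x) -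
          ∑' γ : Γ, (∫ y, starRingEnd 𝕜 (v γ y) * f y ∂μ) * (ball (γ : X) R).indicator (w γ) x)
        2 μ ≤ K * ENNReal.ofReal ((1 + R) ^ (-p)) * eLpNorm f 2 μ := by
  obtain ⟨K, hK, hbound⟩ := exists_lintegral_enorm_tsum_sub_truncation_sq_le hν hp hgrowth hρ
    (fun γ γ' h => (hΓ h).mono (ball_subset_ball hρr) (ball_subset_ball hρr)) hb hlower hw
  set M : ℝ≥0∞ := a * ENNReal.ofReal ((1 + r) ^ ν)
  have hsqrt : ((K * M) ^ (2⁻¹ : ℝ)) ^ 2 = K * M := by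
    rw [← ENNReal.rpow_two, ENNReal.rpow_inv_rpow two_ne_zero]
  refine ⟨ENNReal.ofReal c₀ * (K * M) ^ (2⁻¹ : ℝ), by finiteness, fun R hR f hf => ?_⟩
  have hcoef := tsum_enorm_integral_conj_mul_sq_le (fun _ => measurableSet_ball) hΓ
    (fun γ => hgrowth γ r (hρ.le.trans hρr)) hvsupp hvbound hf.aestronglyMeasurable.aemeasurable
  have hf_ne_top : ∫⁻ x, ‖f x‖ₑ ^ 2 ∂μ ≠ ∞ := by
    rw [← eLpNorm_two_sq]; exact ENNReal.pow_ne_top hf.eLpNorm_ne_top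
  refine eLpNorm_two_le_of_lintegral_sq_le ((hbound R hR _ (ne_top_of_le_ne_top ?_ hcoef)).trans ?_)
  · finiteness
  calc _ ≤ K * ENNReal.ofReal ((1 + R) ^ (-p)) ^ 2 *
        (ENNReal.ofReal c₀ ^ 2 * M * ∫⁻ x, ‖f x‖ₑ ^ 2 ∂μ) := by gcongr
    _ = _ := by rw [mul_pow, mul_pow, hsqrt]; ring

end

theorem stmt12_general {X : Type*} [MetricSpace X] [MeasurableSpace X] [BorelSpace X]
    (vol : Measure X) (A ν : ℝ) (hν : 0 < ν)
    (hgrowth : ∀ (x : X) (R : ℝ), 0 ≤ R →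
      vol (ball x R) ≤ ENNReal.ofReal (A * (1 + R) ^ ν))
    (v₀ r₀ d : ℝ) (hv₀ : 0 < v₀) (hr₀ : 0 < r₀)
    (hlower : ∀ (x : X) (ρ : ℝ), 0 ≤ ρ → ρ ≤ r₀ →
      ENNReal.ofReal (v₀ * ρ ^ d) ≤ vol (ball x ρ))
    (Γ : Set X) (r : ℝ) (hr : 0 < r)
    (hΓ : Γ.Pairwise fun γ γ' => Disjoint (ball γ r) (ball γ' r))
    (w : Γ → X → ℂ)
    (hwloc : ∀ μ' : ℝ, 0 < μ' → ∃ C : ℝ, 0 < C ∧ ∀ (γ : Γ) (x : X),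
      ‖w γ x‖ ≤ C * (1 + dist x (γ : X)) ^ (-μ'))
    (v : Γ → X → ℂ)
    (c₀ : ℝ)
    (hvsupp : ∀ (γ : Γ) (x : X), v γ x ≠ 0 → x ∈ ball (γ : X) r)
    (hvbound : ∀ (γ : Γ) (x : X), ‖v γ x‖ ≤ c₀) :
    ∀ μ' : ℝ, ν < μ' → ∃ C : ℝ, 0 < C ∧ ∀ R : ℝ, 0 < R → ∀ f : X → ℂ, MemLp f 2 vol →
      eLpNorm
        (fun x =>
          (∑' γ : Γ, (∫ y, (starRingEnd ℂ) (v γ y) * f y ∂vol) * w γ x) -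
          (∑' γ : Γ, (∫ y, (starRingEnd ℂ) (v γ y) * f y ∂vol) *
            Set.indicator (ball (γ : X) R) (w γ) x))
        2 vol
      ≤ ENNReal.ofReal (C * (1 + R) ^ (ν - μ')) * eLpNorm f 2 vol := by
  intro μ' hμ'
  have hp : 1 < μ' + 1 := by linarith
  obtain ⟨Cw, -, hw⟩ := hwloc (ν + 2 * (μ' + 1)) (by linarith)
  have hρ : 0 < min r r₀ := lt_min hr hr₀
  -- `ENNReal.ofReal A` is by definition `↑A.toNNReal`, so `hgrowth` and `hlower` apply as they are.
  obtain ⟨K, hK, hbound⟩ := exists_eLpNorm_sub_truncation_le (a := A.toNNReal)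
    (b := (v₀ * min r r₀ ^ d).toNNReal) hν.le hp
    (fun x R hR => (hgrowth x R hR).trans_eq (ENNReal.ofReal_mul' (by positivity)))
    hρ (min_le_left r r₀) (fun γ γ' h => hΓ γ.2 γ'.2 (Subtype.coe_injective.ne h))
    (Real.toNNReal_pos.mpr (by positivity)).ne'
    (fun γ _ => hlower γ _ hρ.le (min_le_right r r₀)) hw hvsupp hvbound
  refine ⟨K.toReal + 1, by positivity, fun R hR f hf => (hbound R hR.le f hf).trans ?_⟩
  rw [ENNReal.ofReal_mul (by positivity)]
  gcongr
  · exact (ENNReal.le_ofReal_iff_toReal_le hK (by positivity)).mpr (by linarith)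
  · linarith
  · linarith

/-- Let `X` have polynomial volume growth exponent `ν` and a lower ball
volume bound, `Γ ⊆ X` uniformly discrete with packing radius `r`, `{w_γ}` a `Γ`-uniformly
localized family, and `{v_γ}` uniformly bounded functions with `supp v_γ ⊆ B_r(γ)`.
Let `V = Σ_γ w_γ ⊗ v_γ*` and `V^R` its truncation using `w_γ^R = w_γ · 1_{B_R(γ)}`.
Then for any fixed `μ > ν` there is a constant `C` with `‖V - V^R‖ ≤ C (1+R)^{ν-μ}`
(so in particular `‖V - V^R‖ → 0` as `R → ∞`). -/
theorem stmt12 {X : Type*} [MetricSpace X] [MeasurableSpace X] [BorelSpace X]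
    (vol : Measure X) (A ν : ℝ) (hA : 0 < A) (hν : 0 < ν)
    (hgrowth : ∀ (x : X) (R : ℝ), 0 ≤ R →
      vol (ball x R) ≤ ENNReal.ofReal (A * (1 + R) ^ ν))
    (v₀ r₀ d : ℝ) (hv₀ : 0 < v₀) (hr₀ : 0 < r₀) (hd : 1 ≤ d)
    (hlower : ∀ (x : X) (ρ : ℝ), 0 ≤ ρ → ρ ≤ r₀ →
      ENNReal.ofReal (v₀ * ρ ^ d) ≤ vol (ball x ρ))
    (Γ : Set X) (r : ℝ) (hr : 0 < r)
    (hΓ : Γ.Pairwise fun γ γ' => Disjoint (ball γ r) (ball γ' r))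
    (w : Γ → X → ℂ) (hwmeas : ∀ γ : Γ, Measurable (w γ))
    (hwloc : ∀ μ' : ℝ, 0 < μ' → ∃ C : ℝ, 0 < C ∧ ∀ (γ : Γ) (x : X),
      ‖w γ x‖ ≤ C * (1 + dist x (γ : X)) ^ (-μ'))
    (v : Γ → X → ℂ) (hvmeas : ∀ γ : Γ, Measurable (v γ))
    (c₀ : ℝ) (hc₀ : 0 < c₀)
    (hvsupp : ∀ (γ : Γ) (x : X), v γ x ≠ 0 → x ∈ ball (γ : X) r)
    (hvbound : ∀ (γ : Γ) (x : X), ‖v γ x‖ ≤ c₀) :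
    ∀ μ' : ℝ, ν < μ' → ∃ C : ℝ, 0 < C ∧ ∀ R : ℝ, 0 < R → ∀ f : X → ℂ, MemLp f 2 vol →
      eLpNorm
        (fun x =>
          (∑' γ : Γ, (∫ y, (starRingEnd ℂ) (v γ y) * f y ∂vol) * w γ x) -
          (∑' γ : Γ, (∫ y, (starRingEnd ℂ) (v γ y) * f y ∂vol) *
            Set.indicator (ball (γ : X) R) (w γ) x))
        2 vol
      ≤ ENNReal.ofReal (C * (1 + R) ^ (ν - μ')) * eLpNorm f 2 vol :=
  stmt12_general vol A ν hν hgrowth v₀ r₀ d hv₀ hr₀ hlower Γ r hr hΓ w hwloc v c₀ hvsupp hvbound
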